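/- Let E be a real inner product space, let O ∈ E, and let R : E → ℝ be a differentiable function with 0 < R(x) ≤ 1 for all x, R(O) < 1, satisfying the gradient bound ‖∇R(x)‖ ≤ R(x)·√(1 − R(x)) for all x ∈ E. Set c = (1 + √(1 − R(O)))/(1 − √(1 − R(O))). Then for every x ∈ E, R(x) ≥ (1/c)·sech²(‖x − O‖/2), where sech(t) = 1/cosh(t). -/

import Mathlib

/-!
Along the segment `γ t = O + t • (x - O)` the function `f = R ∘ γ` satisfies
`f' ≥ -‖x - O‖ · f √(1 - f)`, and `t ↦ sech² (a + ‖x - O‖ t / 2)` with `sech² a = R O`, that is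
`a = artanh √(1 - R O)`, solves the equality case. Comparing `f` at first contact with the strictly
faster barriers `sech² (a + M t)`, `M > ‖x - O‖ / 2`, and letting `M` decrease gives
`R x ≥ sech² (a + ‖x - O‖ / 2)`; finally `cosh (a + u) ≤ eᵃ cosh u` and `e^{2a} = c`.
-/

open Set Real

theorem hasDerivAt_inv_cosh_sq (u : ℝ) :
    HasDerivAt (fun u ↦ (cosh u ^ 2)⁻¹) (-(2 * sinh u / cosh u ^ 3)) u := by
  refine (((hasDerivAt_cosh u).fun_pow 2).fun_inv (pow_pos (cosh_pos u) 2).ne').congr_deriv ?_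
  field_simp
  ring

theorem sqrt_one_sub_inv_cosh_sq {u : ℝ} (hu : 0 ≤ u) :
    √(1 - (cosh u ^ 2)⁻¹) = sinh u / cosh u := by
  have hc := cosh_pos u
  rw [← sqrt_sq (div_nonneg (sinh_nonneg_iff.2 hu) hc.le)]
  congr 1
  field_simp
  linarith [cosh_sq_sub_sinh_sq u]

theorem cosh_add_le_exp_mul_cosh {a : ℝ} (ha : 0 ≤ a) (u : ℝ) :
    cosh (a + u) ≤ exp a * cosh u := by
  have hsinh : sinh u ≤ cosh u := by linarith [cosh_sub_sinh u, exp_pos (-u)]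
  rw [cosh_add, ← cosh_add_sinh a]
  nlinarith [sinh_nonneg_iff.2 ha, cosh_pos a]

theorem inv_cosh_sq_artanh {x : ℝ} (hx : x ∈ Ioo (-1) 1) :
    (cosh (artanh x) ^ 2)⁻¹ = 1 - x ^ 2 := by
  have : 0 < 1 - x ^ 2 := by nlinarith [hx.1, hx.2]
  rw [cosh_artanh hx, div_pow, sq_sqrt this.le]
  simp

theorem exp_artanh_sq {x : ℝ} (hx : x ∈ Ioo (-1) 1) :
    exp (artanh x) ^ 2 = (1 + x) / (1 - x) := by
  rw [exp_artanh hx, sq_sqrt (div_nonneg (by linarith [hx.1]) (by linarith [hx.2]))]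

theorem HasGradientAt.hasDerivAt_comp_line {E : Type*} [NormedAddCommGroup E]
    [InnerProductSpace ℝ E] [CompleteSpace E] {R : E → ℝ} {g x v : E} {t : ℝ}
    (hR : HasGradientAt R g (x + t • v)) :
    HasDerivAt (fun t : ℝ ↦ R (x + t • v)) (inner ℝ g v) t := by
  have hline : HasDerivAt (fun t : ℝ ↦ x + t • v) v t := by
    simpa using ((hasDerivAt_id t).smul_const v).const_add x
  exact hR.hasFDerivAt.comp_hasDerivAt t hline

section Barrier

variable {f f' : ℝ → ℝ} {L a : ℝ}

theorem inv_cosh_sq_le_of_deriv_ge_of_lt (hf : ∀ t, HasDerivAt f (f' t) t)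
    (hf' : ∀ t, -(2 * L * (f t * √(1 - f t))) ≤ f' t) (hL : 0 ≤ L) (ha : 0 < a)
    (h0 : (cosh a ^ 2)⁻¹ ≤ f 0) {M : ℝ} (hLM : L < M) {t : ℝ} (ht : 0 ≤ t) :
    (cosh (a + M * t) ^ 2)⁻¹ ≤ f t := by
  have hB : ∀ s, HasDerivAt (fun s ↦ (cosh (a + M * s) ^ 2)⁻¹)
      (-(2 * sinh (a + M * s) / cosh (a + M * s) ^ 3) * M) s := fun s ↦
    (hasDerivAt_inv_cosh_sq _).comp s (by simpa using ((hasDerivAt_id s).const_mul M).const_add a)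
  refine image_le_of_deriv_right_lt_deriv_boundary
    (fun s _ ↦ (hB s).continuousAt.continuousWithinAt) (fun s _ ↦ (hB s).hasDerivWithinAt)
    (by simpa using h0) hf ?_ ⟨ht, le_rfl⟩
  rintro s ⟨hs, -⟩ hcontact
  set u := a + M * s
  have hu : 0 < u := by have := hL.trans_lt hLM; positivity
  have hq : 0 < sinh u / cosh u ^ 3 := div_pos (sinh_pos_iff.2 hu) (pow_pos (cosh_pos u) 3)
  have hslope := hf' s
  rw [← hcontact, sqrt_one_sub_inv_cosh_sq hu.le,
    show (cosh u ^ 2)⁻¹ * (sinh u / cosh u) = sinh u / cosh u ^ 3 by field_simp] at hslope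
  calc -(2 * sinh u / cosh u ^ 3) * M = -(2 * M * (sinh u / cosh u ^ 3)) := by ring
    _ < -(2 * L * (sinh u / cosh u ^ 3)) := by gcongr
    _ ≤ f' s := hslope

theorem inv_cosh_sq_le_of_deriv_ge (hf : ∀ t, HasDerivAt f (f' t) t)
    (hf' : ∀ t, -(2 * L * (f t * √(1 - f t))) ≤ f' t) (hL : 0 ≤ L) (ha : 0 < a)
    (h0 : (cosh a ^ 2)⁻¹ ≤ f 0) {t : ℝ} (ht : 0 ≤ t) :
    (cosh (a + L * t) ^ 2)⁻¹ ≤ f t := by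
  have hcont : ContinuousAt (fun M ↦ (cosh (a + M * t) ^ 2)⁻¹) L := by
    fun_prop (disch := positivity)
  exact le_of_tendsto (hcont.tendsto.mono_left nhdsWithin_le_nhds) <|
    eventually_nhdsWithin_of_forall (s := Ioi L) fun M hM ↦
      inv_cosh_sq_le_of_deriv_ge_of_lt hf hf' hL ha h0 hM ht

end Barrier

theorem euclidean_model_main_theorem_general
    {E : Type*} [NormedAddCommGroup E] [InnerProductSpace ℝ E] [CompleteSpace E]
    (O : E) (R : E → ℝ) (hdiff : Differentiable ℝ R)
    (hpos : ∀ x, 0 < R x) (hO : R O < 1)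
    (hgrad : ∀ x, ‖gradient R x‖ ≤ R x * Real.sqrt (1 - R x))
    (c : ℝ) (hc : c = (1 + Real.sqrt (1 - R O)) / (1 - Real.sqrt (1 - R O))) :
    ∀ x, R x ≥ (1 / c) * (1 / Real.cosh (‖x - O‖ / 2)) ^ 2 := by
  intro x
  have hs : √(1 - R O) ∈ Ioo 0 1 :=
    ⟨sqrt_pos.2 (by linarith), (sqrt_lt' one_pos).2 (by linarith [hpos O])⟩
  set a := artanh √(1 - R O)
  have hRO : (cosh a ^ 2)⁻¹ = R O := by
    rw [inv_cosh_sq_artanh (Ioo_subset_Ioo_left (by norm_num) hs), sq_sqrt (by linarith)]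
    ring
  have hexp : exp a ^ 2 = c := by
    rw [exp_artanh_sq (Ioo_subset_Ioo_left (by norm_num) hs), hc]
  have hline (t : ℝ) := (hdiff (O + t • (x - O))).hasGradientAt.hasDerivAt_comp_line
  have hslope (t : ℝ) : -(2 * (‖x - O‖ / 2) * (R (O + t • (x - O)) * √(1 - R (O + t • (x - O)))))
      ≤ inner ℝ (gradient R (O + t • (x - O))) (x - O) :=
    calc _ = -((R (O + t • (x - O)) * √(1 - R (O + t • (x - O)))) * ‖x - O‖) := by ring
      _ ≤ -(‖gradient R (O + t • (x - O))‖ * ‖x - O‖) := by gcongr; exact hgrad _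
      _ ≤ _ := neg_le_of_abs_le (abs_real_inner_le_norm _ _)
  have hbarrier := inv_cosh_sq_le_of_deriv_ge hline hslope (by positivity)
    (artanh_pos hs) (by simpa using hRO.le) zero_le_one
  rw [one_smul, add_sub_cancel, mul_one] at hbarrier
  calc (1 / c) * (1 / cosh (‖x - O‖ / 2)) ^ 2 = ((exp a * cosh (‖x - O‖ / 2)) ^ 2)⁻¹ := by
        rw [mul_pow, hexp]; field_simp
    _ ≤ (cosh (a + ‖x - O‖ / 2) ^ 2)⁻¹ := by
        gcongr; exact cosh_add_le_exp_mul_cosh (artanh_pos hs).le _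
    _ ≤ R x := hbarrier

theorem euclidean_model_main_theorem
    {E : Type*} [NormedAddCommGroup E] [InnerProductSpace ℝ E] [CompleteSpace E]
    (O : E) (R : E → ℝ) (hdiff : Differentiable ℝ R)
    (hpos : ∀ x, 0 < R x) (hle : ∀ x, R x ≤ 1) (hO : R O < 1)
    (hgrad : ∀ x, ‖gradient R x‖ ≤ R x * Real.sqrt (1 - R x))
    (c : ℝ) (hc : c = (1 + Real.sqrt (1 - R O)) / (1 - Real.sqrt (1 - R O))) :
    ∀ x, R x ≥ (1 / c) * (1 / Real.cosh (‖x - O‖ / 2)) ^ 2 :=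
  euclidean_model_main_theorem_general O R hdiff hpos hO hgrad c hc
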